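/- Assume the Markov chain with transition kernel P is m-recurrent for some nonzero σ-finite measure m. Then for any r ∈ (0,1) there exist a set A ∈ 𝓑 with 0 < m(A) < ∞, a positive integer k and a constant s > 0 such that for all x ∈ A, m({ y ∈ A : p^1(x,y) + p^2(x,y) + ⋯ + p^k(x,y) > s }) > r·m(A). -/

import Mathlib

open MeasureTheory ProbabilityTheory
open scoped ENNReal NNReal

noncomputable section

/-- The hitting time `T_A = inf {n ≥ 1 : ω n ∈ A}`, with value `⊤ : ℕ∞` if no such `n` exists. -/
def hitTime {S : Type*} (A : Set S) (ω : ℕ → S) : ℕ∞ :=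
  sInf ((fun k : ℕ => (k : ℕ∞)) '' {k : ℕ | 1 ≤ k ∧ ω k ∈ A})

/-- `IsMarkovPath K μ₀ L` says that `L` is the law on path space `ℕ → E` of the
time-homogeneous Markov chain with transition kernel `K` and initial distribution `μ₀`
(the measure produced by the Ionescu–Tulcea construction), characterized through its
finite-dimensional distributions. -/
def IsMarkovPath {E : Type*} [MeasurableSpace E] (K : Kernel E E) (μ₀ : Measure E)
    (L : Measure (ℕ → E)) : Prop :=
  IsProbabilityMeasure L ∧
    L.map (fun ω => ω 0) = μ₀ ∧
    ∀ n : ℕ,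
      L.map (fun ω => fun i : Fin (n + 2) => ω (i : ℕ)) =
        (L.map (fun ω => fun i : Fin (n + 1) => ω (i : ℕ))).bind
          (fun v => (K (v (Fin.last n))).map (Fin.snoc v))

/-- The `n`-step transition kernel `K^n`. -/
def kiter {E : Type*} [MeasurableSpace E] (K : Kernel E E) : ℕ → Kernel E E
  | 0 => Kernel.id
  | n + 1 => (kiter K n) ∘ₖ K

instance kiter.isMarkovKernel {E : Type*} [MeasurableSpace E] (K : Kernel E E)
    [IsMarkovKernel K] (n : ℕ) : IsMarkovKernel (kiter K n) := by
  induction n with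
  | zero => rw [kiter]; infer_instance
  | succ n ih => rw [kiter]; infer_instance

/-! Recurrence makes the potential measure `∑ₙ Pⁿ⁺¹(x, ·)` dominate `m` for every `x`, since a
set `B` with `Pⁿ(x, B) = 0` for all `n ≥ 1` is never hit from `x`. Hence for `m`-a.e. `y` some
`pⁿ(x, y)`, `n ≥ 1`, is positive, and on a set `F` of finite positive measure the functions
`φ_N(x) = m(F ∩ {p¹(x, ·) + ⋯ + p^N(x, ·) > 1/N})` increase to `m(F)` at every `x`. By
continuity from above, `φ_N` exceeds `r·m(F) + δ` for one fixed `N` outside a subset of `F` of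
measure `< δ`; the rest of `F` is the set `A`. -/

namespace MeasureTheory

lemma monotone_setOf_inv_lt {α : Type*} {q : ℕ → α → ℝ≥0∞} (hq : Monotone q) :
    Monotone fun N : ℕ => {y | ((N : ℝ≥0∞) + 1)⁻¹ < q (N + 1) y} := by
  intro N M hNM y hy
  calc ((M : ℝ≥0∞) + 1)⁻¹ ≤ ((N : ℝ≥0∞) + 1)⁻¹ := by gcongr
    _ < q (N + 1) y := hy
    _ ≤ q (M + 1) y := hq (by omega) y

variable {α : Type*} [MeasurableSpace α]

lemma Measure.AbsolutelyContinuous.ae_exists_rnDeriv_pos {ι : Type*} [Countable ι]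
    {ν : Measure α} [SigmaFinite ν] {μ : ι → Measure α} [∀ i, SigmaFinite (μ i)]
    (hν : ν ≪ Measure.sum μ) : ∀ᵐ y ∂ν, ∃ i, 0 < (μ i).rnDeriv ν y := by
  set Z := ⋂ i, (μ i).rnDeriv ν ⁻¹' {0}
  have hZ : MeasurableSet Z :=
    MeasurableSet.iInter fun i => Measure.measurable_rnDeriv _ _ (measurableSet_singleton 0)
  have hsing : ∀ i, (μ i).restrict Z ⟂ₘ ν := by
    intro i
    rw [← Measure.rnDeriv_eq_zero]
    filter_upwards [Measure.rnDeriv_restrict (μ i) ν hZ] with y hy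
    by_cases hyZ : y ∈ Z
    · simpa [hy, hyZ] using Set.mem_iInter.1 hyZ i
    · simp [hy, hyZ]
  have hsum : (Measure.sum μ).restrict Z ⟂ₘ ν := by
    rw [Measure.restrict_sum _ hZ]
    exact Measure.MutuallySingular.sum_left.2 hsing
  have hZ0 : ν.restrict Z = 0 :=
    Measure.eq_zero_of_absolutelyContinuous_of_mutuallySingular
      (Measure.absolutelyContinuous_of_le Measure.restrict_le_self)
      (hsum.mono_ac (hν.restrict Z) .rfl)
  filter_upwards [measure_eq_zero_iff_ae_notMem.1 (Measure.restrict_eq_zero.1 hZ0)] with y hy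
  simpa [Z, pos_iff_ne_zero] using hy

lemma exists_measure_setOf_le_lt_of_lt_iSup {μ : Measure α} [IsFiniteMeasure μ]
    {φ : ℕ → α → ℝ≥0∞} (hφ : ∀ N, Measurable (φ N)) (hφ_mono : Monotone φ) {c : ℝ≥0∞}
    (hc : ∀ x, c < ⨆ N, φ N x) {δ : ℝ≥0∞} (hδ : 0 < δ) : ∃ N, μ {x | φ N x ≤ c} < δ := by
  have hanti : Antitone fun N => {x | φ N x ≤ c} :=
    fun N M hNM x hx => (hφ_mono hNM x).trans hx
  have hempty : ⋂ N, {x | φ N x ≤ c} = ∅ :=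
    Set.eq_empty_of_forall_notMem fun x hx =>
      (hc x).not_ge (iSup_le fun N => Set.mem_iInter.1 hx N)
  have hlim := tendsto_measure_iInter_atTop
    (fun N => (measurableSet_le (hφ N) measurable_const).nullMeasurableSet) hanti
    ⟨0, measure_ne_top μ _⟩
  rw [hempty, measure_empty] at hlim
  exact (hlim.eventually (gt_mem_nhds hδ)).exists

lemma iSup_measure_inter_setOf_inv_lt (m : Measure α) (F : Set α) {q : ℕ → α → ℝ≥0∞}
    (hq : Monotone q) (hq_pos : ∀ᵐ y ∂m, ∃ k, 0 < q k y) :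
    ⨆ N : ℕ, m (F ∩ {y | ((N : ℝ≥0∞) + 1)⁻¹ < q (N + 1) y}) = m F := by
  refine le_antisymm (iSup_le fun N => measure_mono Set.inter_subset_left) ?_
  have hD : Monotone fun N : ℕ => F ∩ {y | ((N : ℝ≥0∞) + 1)⁻¹ < q (N + 1) y} :=
    fun N M hNM => Set.inter_subset_inter_right F (monotone_setOf_inv_lt hq hNM)
  rw [← hD.measure_iUnion]
  refine measure_mono_ae ?_
  filter_upwards [hq_pos] with y ⟨k, hk⟩ hyF
  obtain ⟨j, hj⟩ := ENNReal.exists_inv_nat_lt hk.ne'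
  refine Set.mem_iUnion.2 ⟨j + k, hyF, ?_⟩
  calc ((↑(j + k) : ℝ≥0∞) + 1)⁻¹ ≤ (j : ℝ≥0∞)⁻¹ := by
        gcongr; exact_mod_cast (by omega : j ≤ j + k + 1)
    _ < q k y := hj
    _ ≤ q (j + k + 1) y := hq (by omega) y

lemma measurable_measure_inter_setOf_lt (m : Measure α) {F : Set α} (hF_top : m F ≠ ∞)
    {f : α → α → ℝ≥0∞} (hf : Measurable fun z : α × α => f z.1 z.2) (c : ℝ≥0∞) :
    Measurable fun x => m (F ∩ {y | c < f x y}) := by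
  have : IsFiniteMeasure (m.restrict F) := isFiniteMeasure_restrict.2 hF_top
  have hE : MeasurableSet {z : α × α | c < f z.1 z.2} := measurableSet_lt measurable_const hf
  convert measurable_measure_prodMk_left (ν := m.restrict F) hE using 2 with x
  rw [Measure.restrict_apply (measurable_prodMk_left hE), Set.inter_comm]
  rfl

theorem exists_forall_mul_measure_lt_measure_setOf_lt (m : Measure α) {F : Set α}
    (hF : MeasurableSet F) (hF0 : m F ≠ 0) (hF_top : m F ≠ ∞) {q : ℕ → α → α → ℝ≥0∞}
    (hq_meas : ∀ k, Measurable fun z : α × α => q k z.1 z.2) (hq_mono : Monotone q)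
    (hq_pos : ∀ x, ∀ᵐ y ∂m, ∃ k, 0 < q k x y) {r : ℝ≥0∞} (hr : r < 1) :
    ∃ A : Set α, MeasurableSet A ∧ 0 < m A ∧ m A < ∞ ∧
      ∃ k : ℕ, 1 ≤ k ∧ ∃ s : ℝ≥0∞, 0 < s ∧
        ∀ x ∈ A, r * m A < m {y ∈ A | s < q k x y} := by
  have : IsFiniteMeasure (m.restrict F) := isFiniteMeasure_restrict.2 hF_top
  set φ : ℕ → α → ℝ≥0∞ := fun N x => m (F ∩ {y | ((N : ℝ≥0∞) + 1)⁻¹ < q (N + 1) x y})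
  have hφ_meas : ∀ N, Measurable (φ N) := fun N =>
    measurable_measure_inter_setOf_lt m hF_top (hq_meas (N + 1)) _
  have hφ_mono : Monotone φ := fun N M hNM x =>
    measure_mono (Set.inter_subset_inter_right F (monotone_setOf_inv_lt (q := fun k => q k x)
      (fun _ _ h => hq_mono h x) hNM))
  have hφ_sup : ∀ x, ⨆ N, φ N x = m F := fun x =>
    iSup_measure_inter_setOf_inv_lt m F (fun _ _ h => hq_mono h x) (hq_pos x)
  obtain ⟨δ, hδ0, hδ⟩ : ∃ δ : ℝ≥0, 0 < δ ∧ r * m F + δ < m F :=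
    ENNReal.lt_iff_exists_add_pos_lt.1 (by simpa using ENNReal.mul_lt_mul_left hF0 hF_top hr)
  obtain ⟨N, hN⟩ := exists_measure_setOf_le_lt_of_lt_iSup (μ := m.restrict F) hφ_meas hφ_mono
    (c := r * m F + δ) (fun x => (hφ_sup x).symm ▸ hδ) (ENNReal.coe_pos.2 hδ0)
  set A := F ∩ {x | r * m F + δ < φ N x}
  have hA : MeasurableSet A := hF.inter (measurableSet_lt measurable_const (hφ_meas N))
  have hFA : m (F \ A) < δ := by
    calc m (F \ A) ≤ m.restrict F {x | φ N x ≤ r * m F + δ} := by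
          rw [Measure.restrict_apply' hF]
          refine measure_mono fun x hx => ?_
          simp only [A, Set.mem_sdiff, Set.mem_inter_iff, Set.mem_ofPred_eq, not_and,
            not_lt] at hx ⊢
          exact ⟨hx.2 hx.1, hx.1⟩
      _ < δ := hN
  have hA_pos : 0 < m A := by
    refine pos_iff_ne_zero.2 fun hA0 => (hδ.trans_le ?_).false
    calc m F = m A + m (F \ A) := by
          rw [← measure_inter_add_sdiff F hA, Set.inter_eq_right.2 Set.inter_subset_left]
      _ ≤ r * m F + δ := by rw [hA0, zero_add]; exact hFA.le.trans le_add_self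
  refine ⟨A, hA, hA_pos, (measure_mono Set.inter_subset_left).trans_lt hF_top.lt_top,
    N + 1, le_add_self, ((N : ℝ≥0∞) + 1)⁻¹, ENNReal.inv_pos.2 (by simp), fun x hx => ?_⟩
  have hφ_le : φ N x ≤ m {y ∈ A | ((N : ℝ≥0∞) + 1)⁻¹ < q (N + 1) x y} + δ := by
    refine (measure_mono fun y hy => ?_).trans
      ((measure_union_le _ _).trans (add_le_add_right hFA.le _))
    by_cases hyA : y ∈ A
    · exact Or.inl ⟨hyA, hy.2⟩
    · exact Or.inr ⟨hy.1, hyA⟩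
  calc r * m A ≤ r * m F := by gcongr; exact Set.inter_subset_left
    _ < _ := lt_of_add_lt_add_right (hx.2.trans_le hφ_le)

end MeasureTheory

namespace ProbabilityTheory

lemma hitTime_lt_top_iff {E : Type*} {A : Set E} {ω : ℕ → E} :
    hitTime A ω < ⊤ ↔ ∃ n, ω (n + 1) ∈ A := by
  constructor
  · intro h
    by_contra! hA
    have : {k : ℕ | 1 ≤ k ∧ ω k ∈ A} = ∅ := by
      ext k
      simp only [Set.mem_ofPred_eq, Set.mem_empty_iff_false, iff_false, not_and]
      intro hk
      simpa [Nat.sub_add_cancel hk] using hA (k - 1)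
    simp [hitTime, this] at h
  · rintro ⟨n, hn⟩
    exact (sInf_le (Set.mem_image_of_mem _
      (show n + 1 ∈ {k : ℕ | 1 ≤ k ∧ ω k ∈ A} from ⟨Nat.le_add_left 1 n, hn⟩))).trans_lt
      (ENat.natCast_lt_top _)

variable {E : Type*} [MeasurableSpace E]

lemma kiter_succ' (K : Kernel E E) (n : ℕ) : kiter K (n + 1) = K ∘ₖ kiter K n := by
  induction n with
  | zero => simp [kiter]
  | succ n ih =>
    calc kiter K (n + 2) = (K ∘ₖ kiter K n) ∘ₖ K := by rw [← ih]; rfl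
      _ = K ∘ₖ kiter K (n + 1) := Kernel.comp_assoc _ _ _

lemma measurable_finSnoc (n : ℕ) :
    Measurable (fun p : (Fin (n + 1) → E) × E => (Fin.snoc p.1 p.2 : Fin (n + 2) → E)) := by
  refine measurable_pi_lambda _ fun i => ?_
  induction i using Fin.lastCases with
  | last => simpa only [Fin.snoc_last] using measurable_snd
  | cast j => simpa only [Fin.snoc_castSucc] using measurable_fst.eval

def snocKernel (K : Kernel E E) (n : ℕ) : Kernel (Fin (n + 1) → E) (Fin (n + 2) → E) :=
  (Kernel.id ×ₖ K.comap (fun v => v (Fin.last n)) (measurable_pi_apply _)).map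
    (fun p => Fin.snoc p.1 p.2)

lemma snocKernel_apply (K : Kernel E E) [IsSFiniteKernel K] (n : ℕ) (v : Fin (n + 1) → E) :
    snocKernel K n v = (K (v (Fin.last n))).map (Fin.snoc v) := by
  rw [snocKernel, Kernel.map_apply _ (measurable_finSnoc n), Kernel.prod_apply,
    Kernel.id_apply, Kernel.comap_apply, Measure.dirac_prod,
    Measure.map_map (measurable_finSnoc n) measurable_prodMk_left]
  rfl

lemma map_snocKernel_last (K : Kernel E E) [IsSFiniteKernel K] (n : ℕ) :
    (snocKernel K n).map (fun v => v (Fin.last (n + 1))) =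
      K.comap (fun v => v (Fin.last n)) (measurable_pi_apply _) := by
  rw [snocKernel, ← Kernel.map_comp_right _ (measurable_finSnoc n) (measurable_pi_apply _)]
  have : (fun v : Fin (n + 2) → E => v (Fin.last (n + 1))) ∘
      (fun p : (Fin (n + 1) → E) × E => (Fin.snoc p.1 p.2 : Fin (n + 2) → E)) = Prod.snd := by
    funext p; simp
  rw [this, ← Kernel.snd_eq, Kernel.snd_prod]

theorem IsMarkovPath.map_eval {K : Kernel E E} [IsMarkovKernel K] {μ₀ : Measure E}
    {L : Measure (ℕ → E)} (hL : IsMarkovPath K μ₀ L) (n : ℕ) :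
    L.map (fun ω => ω n) = kiter K n ∘ₘ μ₀ := by
  have hfdd : ∀ k, Measurable (fun ω : ℕ → E => fun i : Fin k => ω i) :=
    fun k => measurable_pi_lambda _ fun i => measurable_pi_apply _
  have eval_eq : ∀ k, L.map (fun ω => ω k) =
      (L.map (fun ω => fun i : Fin (k + 1) => ω i)).map (fun v => v (Fin.last k)) := by
    intro k
    rw [Measure.map_map (measurable_pi_apply _) (hfdd _)]
    simp [Function.comp_def]
  induction n with
  | zero => rw [hL.2.1, kiter, Measure.id_comp]
  | succ k ih =>
    have hstep : (fun v : Fin (k + 1) → E => (K (v (Fin.last k))).map (Fin.snoc v)) =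
        snocKernel K k := funext fun v => (snocKernel_apply K k v).symm
    rw [eval_eq, hL.2.2 k, hstep, Measure.map_comp _ _ (measurable_pi_apply _),
      map_snocKernel_last, ← Kernel.comp_deterministic_eq_comap, ← Measure.comp_assoc,
      Measure.deterministic_comp_eq_map, ← eval_eq, ih, Measure.comp_assoc, kiter_succ']

lemma measure_hitTime_lt_top_le {K : Kernel E E} [IsMarkovKernel K] {x : E}
    {L : Measure (ℕ → E)} (hL : IsMarkovPath K (Measure.dirac x) L) {A : Set E}
    (hA : MeasurableSet A) :
    L {ω | hitTime A ω < ⊤} ≤ Measure.sum (fun n => kiter K (n + 1) x) A := by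
  have hlaw : ∀ n, L {ω | ω (n + 1) ∈ A} = kiter K (n + 1) x A := by
    intro n
    change L ((fun ω => ω (n + 1)) ⁻¹' A) = _
    rw [← Measure.map_apply (measurable_pi_apply _) hA, hL.map_eval,
      Measure.dirac_bind (Kernel.measurable _)]
  simp_rw [hitTime_lt_top_iff, Set.ofPred_exists, Measure.sum_apply _ hA, ← hlaw]
  exact measure_iUnion_le _

lemma absolutelyContinuous_sum_kiter {K : Kernel E E} [IsMarkovKernel K] {x : E}
    {L : Measure (ℕ → E)} (hL : IsMarkovPath K (Measure.dirac x) L) {m : Measure E}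
    (hrec : ∀ A : Set E, MeasurableSet A → 0 < m A → L {ω | hitTime A ω < ⊤} = 1) :
    m ≪ Measure.sum (fun n => kiter K (n + 1) x) := by
  refine Measure.AbsolutelyContinuous.mk fun A hA hA0 => ?_
  by_contra hmA
  have := (hrec A hA (pos_iff_ne_zero.2 hmA)).symm.trans_le (measure_hitTime_lt_top_le hL hA)
  simp [hA0] at this

end ProbabilityTheory

theorem harris_lemma_minorization_set_general
    {S : Type*} [MeasurableSpace S]
    (P : Kernel S S) [IsMarkovKernel P]
    (Pr : S → Measure (ℕ → S))
    (hPr : ∀ x : S, IsMarkovPath P (Measure.dirac x) (Pr x))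
    (m : Measure S) [SigmaFinite m] (hm : m ≠ 0)
    (hrec : ∀ A : Set S, MeasurableSet A → 0 < m A →
      ∀ x : S, Pr x {ω | hitTime A ω < ⊤} = 1)
    (p : ℕ → S → S → ℝ≥0∞)
    (hp_meas : ∀ n : ℕ, Measurable (fun q : S × S => p n q.1 q.2))
    (hp : ∀ n : ℕ, 1 ≤ n → ∀ x : S, (fun y => p n x y) =ᵐ[m] (kiter P n x).rnDeriv m)
    (r : ℝ≥0∞) (hr1 : r < 1) :
    ∃ A : Set S, MeasurableSet A ∧ 0 < m A ∧ m A < ⊤ ∧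
      ∃ k : ℕ, 1 ≤ k ∧ ∃ s : ℝ≥0∞, 0 < s ∧
        ∀ x ∈ A, r * m A < m {y ∈ A | s < ∑ i ∈ Finset.Icc 1 k, p i x y} := by
  obtain ⟨n, hn⟩ := exists_measure_pos_of_not_measure_iUnion_null
    (by rwa [iUnion_spanningSets, Ne, Measure.measure_univ_eq_zero] : m (⋃ n, spanningSets m n) ≠ 0)
  have hpos : ∀ x, ∀ᵐ y ∂m, ∃ k, 0 < ∑ i ∈ Finset.Icc 1 k, p i x y := by
    intro x
    filter_upwards [ae_all_iff.2 fun n => hp (n + 1) le_add_self x,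
      (absolutelyContinuous_sum_kiter (hPr x) (hrec · · · x)).ae_exists_rnDeriv_pos]
      with y hpy ⟨k, hk⟩
    refine ⟨k + 1, hk.trans_le ?_⟩
    rw [← hpy k]
    exact Finset.single_le_sum (f := fun i => p i x y) (fun _ _ => zero_le) (by simp)
  exact exists_forall_mul_measure_lt_measure_setOf_lt m (measurableSet_spanningSets m n) hn.ne'
    (measure_spanningSets_lt_top m n).ne (fun k => Finset.measurable_sum _ fun i _ => hp_meas i)
    (fun k l hkl x y => Finset.sum_le_sum_of_subset (Finset.Icc_subset_Icc_right hkl)) hpos hr1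

/-- **Harris's technical lemma.** If the chain is `m`-recurrent then for any `r ∈ (0,1)`
there are a set `A` with `0 < m (A) < ∞`, an integer `k ≥ 1` and a constant `s > 0` such
that `m {y ∈ A : p^1 (x,y) + ⋯ + p^k (x,y) > s} > r · m (A)` for all `x ∈ A`.  Here `p n`
is a jointly measurable version of the density with respect to `m` of the absolutely
continuous part of the `n`-step transition probability. -/
theorem harris_lemma_minorization_set
    {S : Type*} [MeasurableSpace S] [MeasurableSpace.CountablyGenerated S]
    (P : Kernel S S) [IsMarkovKernel P]
    (Pr : S → Measure (ℕ → S))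
    (hPr : ∀ x : S, IsMarkovPath P (Measure.dirac x) (Pr x))
    (m : Measure S) [SigmaFinite m] (hm : m ≠ 0)
    (hrec : ∀ A : Set S, MeasurableSet A → 0 < m A →
      ∀ x : S, Pr x {ω | hitTime A ω < ⊤} = 1)
    (p : ℕ → S → S → ℝ≥0∞)
    (hp_meas : ∀ n : ℕ, Measurable (fun q : S × S => p n q.1 q.2))
    (hp : ∀ n : ℕ, 1 ≤ n → ∀ x : S, (fun y => p n x y) =ᵐ[m] (kiter P n x).rnDeriv m)
    (r : ℝ≥0∞) (hr0 : 0 < r) (hr1 : r < 1) :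
    ∃ A : Set S, MeasurableSet A ∧ 0 < m A ∧ m A < ⊤ ∧
      ∃ k : ℕ, 1 ≤ k ∧ ∃ s : ℝ≥0∞, 0 < s ∧
        ∀ x ∈ A, r * m A < m {y ∈ A | s < ∑ i ∈ Finset.Icc 1 k, p i x y} :=
  harris_lemma_minorization_set_general P Pr hPr m hm hrec p hp_meas hp r hr1
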